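/- Let q_h > 0 be fixed. Then the function q_l ↦ 4·q_h²·(q_h − q_l)/(4·q_h − q_l)² is monotone nonincreasing on the interval [0, q_h]. -/

import Mathlib

/-! Substituting `x = q_h - q_l` turns the utility into `4 q_h² · x / (x + 3 q_h)²`, with `x`
decreasing in `q_l`. The map `x ↦ x / (x + c)²` increases on `[0, c]`, because
`y (x + c)² - x (y + c)² = (y - x) (c² - x y)`. -/

theorem monotoneOn_div_add_sq (c : ℝ) :
    MonotoneOn (fun x : ℝ => x / (x + c) ^ 2) (Set.Icc 0 c) := by
  rintro x ⟨hx0, hxc⟩ y ⟨hy0, hyc⟩ hxy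
  rcases hxy.eq_or_lt with rfl | hlt
  · rfl
  have hc : 0 < c := by linarith
  have hprod : x * y ≤ c ^ 2 := by nlinarith
  show x / (x + c) ^ 2 ≤ y / (y + c) ^ 2
  rw [div_le_div_iff₀ (by positivity) (by positivity)]
  linear_combination mul_nonneg (sub_nonneg.2 hxy) (sub_nonneg.2 hprod)

theorem Uh_antitone_in_ql (qh : ℝ) :
    AntitoneOn (fun ql : ℝ => 4 * qh ^ 2 * (qh - ql) / (4 * qh - ql) ^ 2)
      (Set.Icc 0 qh) := by
  intro a ha b hb hab
  have hsubst : ∀ q ∈ Set.Icc 0 qh, qh - q ∈ Set.Icc 0 (3 * qh) := fun q hq =>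
    ⟨by linarith [hq.2], by linarith [hq.1, hq.2]⟩
  have hmono := monotoneOn_div_add_sq (3 * qh) (hsubst b hb) (hsubst a ha) (by linarith)
  have hscaled := mul_le_mul_of_nonneg_left hmono (by positivity : (0 : ℝ) ≤ 4 * qh ^ 2)
  convert hscaled using 1 <;> ring
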